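/- There is a constant C = C(N) > 0 such that for all x, y in the closed upper half-space and t > 0 with |x−y*|² < 2(N+2)t and t < 4(N+2), one has H(x,y,t) ≤ C (x_N + y_N + t) |x − y* + t e_N|^{-N}. -/

import Mathlib

open Real MeasureTheory Set

/-- Reflection `y* = (y', -y_N)` across the boundary of the half-space. -/
noncomputable def ystar (N : ℕ) (y : Fin (N + 1) → ℝ) : Fin (N + 1) → ℝ :=
  Function.update y (Fin.last N) (-(y (Fin.last N)))

/-- The last unit vector `e_N`. -/
noncomputable def eN (N : ℕ) : Fin (N + 1) → ℝ := Pi.single (Fin.last N) 1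

/-- `H(x,y,t) = ∫_0^t (4π(t-τ))^{-N/2} ((x_N+y_N+τ)/(t-τ)) e^{-|x-y*+τe_N|²/(4(t-τ))} dτ`. -/
noncomputable def Hexp (N : ℕ) (x y : Fin (N + 1) → ℝ) (t : ℝ) : ℝ :=
  ∫ τ in (0 : ℝ)..t,
    (4 * π * (t - τ)) ^ (-((N : ℝ) + 1) / 2) *
      ((x (Fin.last N) + y (Fin.last N) + τ) / (t - τ)) *
      Real.exp (-(∑ i, (x i - ystar N y i + τ * eN N i) ^ 2) / (4 * (t - τ)))

lemma upow_le (p : ℝ) (n : ℕ) (hp : 0 ≤ p) (hpn : p ≤ n) :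
    ∀ u : ℝ, 0 < u → u ^ p * Real.exp (-u) ≤ (n.factorial : ℝ) := by
  intro u hu
  have hfac : (1 : ℝ) ≤ (n.factorial : ℝ) := by
    exact_mod_cast Nat.one_le_iff_ne_zero.2 (Nat.factorial_ne_zero n)
  rcases le_total u 1 with h | h
  · have h1 : u ^ p ≤ 1 := Real.rpow_le_one hu.le h hp
    have h2 : Real.exp (-u) ≤ 1 := Real.exp_le_one_iff.2 (by linarith)
    nlinarith [Real.exp_pos (-u), Real.rpow_nonneg hu.le p]
  · have h1 : u ^ p ≤ u ^ (n : ℝ) := Real.rpow_le_rpow_of_exponent_le h hpn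
    rw [Real.rpow_natCast] at h1
    have h2 : u ^ n / (n.factorial : ℝ) ≤ Real.exp u :=
      Real.pow_div_factorial_le_exp (x := u) (by linarith) n
    have h3 : u ^ n ≤ (n.factorial : ℝ) * Real.exp u := by
      rw [div_le_iff₀ (by positivity)] at h2; linarith
    calc u ^ p * Real.exp (-u) ≤ u ^ n * Real.exp (-u) := by
          gcongr
      _ ≤ ((n.factorial : ℝ) * Real.exp u) * Real.exp (-u) := by
          gcongr
      _ = (n.factorial : ℝ) := by rw [mul_assoc, ← Real.exp_add]; simp

lemma hfun_facts (p c : ℝ) (n : ℕ) (hp1 : 1 < p) (hpn : p ≤ n) (hc : 0 < c) :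
    Measurable (fun s : ℝ => s ^ (-p) * Real.exp (-(c / s))) ∧
    (∀ s : ℝ, 0 < s →
      s ^ (-p) * Real.exp (-(c / s)) ≤ (n.factorial : ℝ) * c ^ (-p)) ∧
    IntegrableOn (fun s : ℝ => s ^ (-p) * Real.exp (-(c / s))) (Ioi 0) ∧
      (∫ s in Ioi (0 : ℝ), s ^ (-p) * Real.exp (-(c / s)))
        ≤ ((n.factorial : ℝ) + 1 / (p - 1)) * c ^ (1 - p) := by
  set f : ℝ → ℝ := fun s => s ^ (-p) * Real.exp (-(c / s)) with hf
  have hmeas : Measurable f := by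
    exact (measurable_id.pow measurable_const).mul ((measurable_const.div measurable_id).neg.exp)
  have hfnn : ∀ s : ℝ, 0 ≤ s → 0 ≤ f s := fun s hs =>
    mul_nonneg (Real.rpow_nonneg hs _) (Real.exp_pos _).le
  have hrw : ∀ s : ℝ, 0 < s → f s = ((c / s) ^ p * Real.exp (-(c / s))) * c ^ (-p) := by
    intro s hs
    have h1 : (c / s) ^ p = c ^ p * (s ^ p)⁻¹ := by
      rw [Real.div_rpow hc.le hs.le, div_eq_mul_inv]
    have h2 : c ^ p * c ^ (-p) = 1 := by
      rw [← Real.rpow_add hc]; simp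
    have h3 : s ^ (-p) = (s ^ p)⁻¹ := Real.rpow_neg hs.le p
    rw [hf]; simp only
    rw [h1, h3]
    linear_combination (-(s ^ p)⁻¹ * Real.exp (-(c / s))) * h2
  have hb1 : ∀ s : ℝ, 0 < s → f s ≤ (n.factorial : ℝ) * c ^ (-p) := by
    intro s hs
    rw [hrw s hs]
    have h := upow_le p n (by linarith) hpn (c / s) (by positivity)
    have hcp : (0:ℝ) ≤ c ^ (-p) := Real.rpow_nonneg hc.le _
    exact mul_le_mul_of_nonneg_right h hcp
  have hint1 : IntegrableOn f (Ioc 0 c) := by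
    refine Integrable.mono' (integrable_const ((n.factorial : ℝ) * c ^ (-p)))
      hmeas.aestronglyMeasurable ?_
    filter_upwards [ae_restrict_mem measurableSet_Ioc] with s hs
    rw [Real.norm_eq_abs, abs_of_nonneg (hfnn s hs.1.le)]
    exact hb1 s hs.1
  have hint2 : IntegrableOn f (Ioi c) := by
    refine Integrable.mono' (integrableOn_Ioi_rpow_of_lt (by linarith : -p < -1) hc)
      hmeas.aestronglyMeasurable ?_
    filter_upwards [ae_restrict_mem measurableSet_Ioi] with s hs
    have hs0 : 0 < s := hc.trans hs
    rw [Real.norm_eq_abs, abs_of_nonneg (hfnn s hs0.le)]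
    have hE : Real.exp (-(c / s)) ≤ 1 :=
      Real.exp_le_one_iff.2 (neg_nonpos.2 (by positivity))
    exact mul_le_of_le_one_right (Real.rpow_nonneg hs0.le _) hE
  have hunion : Ioc (0:ℝ) c ∪ Ioi c = Ioi 0 := Ioc_union_Ioi_eq_Ioi hc.le
  have hint : IntegrableOn f (Ioi 0) := by
    rw [← hunion]; exact hint1.union hint2
  refine ⟨hmeas, hb1, hint, ?_⟩
  rw [← hunion, setIntegral_union (Ioc_disjoint_Ioi le_rfl) measurableSet_Ioi hint1 hint2]
  have e1 : (∫ s in Ioc (0:ℝ) c, f s) ≤ (n.factorial : ℝ) * c ^ (1 - p) := by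
    calc (∫ s in Ioc (0:ℝ) c, f s) ≤ ∫ _ in Ioc (0:ℝ) c, (n.factorial : ℝ) * c ^ (-p) := by
          refine setIntegral_mono_on hint1
            (integrableOn_const measure_Ioc_lt_top.ne)
            measurableSet_Ioc ?_
          intro s hs; exact hb1 s hs.1
      _ = (n.factorial : ℝ) * c ^ (1 - p) := by
          rw [setIntegral_const, measureReal_def, Real.volume_Ioc, smul_eq_mul, ENNReal.toReal_ofReal (by linarith)]
          rw [show (1 : ℝ) - p = -p + 1 by ring, Real.rpow_add_one hc.ne']
          ring
  have e2 : (∫ s in Ioi c, f s) ≤ (1 / (p - 1)) * c ^ (1 - p) := by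
    calc (∫ s in Ioi c, f s) ≤ ∫ s in Ioi c, s ^ (-p) := by
          refine setIntegral_mono_on hint2 (integrableOn_Ioi_rpow_of_lt (by linarith) hc)
            measurableSet_Ioi ?_
          intro s hs
          have hs0 : 0 < s := hc.trans hs
          have hE : Real.exp (-(c / s)) ≤ 1 :=
            Real.exp_le_one_iff.2 (neg_nonpos.2 (by positivity))
          exact mul_le_of_le_one_right (Real.rpow_nonneg hs0.le _) hE
      _ = -c ^ (-p + 1) / (-p + 1) := integral_Ioi_rpow_of_lt (by linarith) hc
      _ = (1 / (p - 1)) * c ^ (1 - p) := by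
          rw [show -p + 1 = 1 - p by ring, one_div_mul_eq_div,
            div_eq_div_iff (by linarith : (1:ℝ) - p ≠ 0) (by linarith : p - 1 ≠ 0)]
          ring
  nlinarith [Real.rpow_nonneg hc.le (1 - p)]

set_option maxHeartbeats 1500000 in
/-- In the region `D₁` (`|x-y*|² < 2(N+2)t`, `t < 4(N+2)`) the kernel `H` is bounded above
by a constant multiple of the Poisson-type kernel `(x_N+y_N+t)|x-y*+te_N|^{-N}`
(dimension is `N+1 ≥ 1`). -/
theorem stmt_9 (N : ℕ) :
    ∃ C > (0 : ℝ), ∀ (x y : Fin (N + 1) → ℝ) (t : ℝ),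
      0 ≤ x (Fin.last N) → 0 ≤ y (Fin.last N) → 0 < t →
      (∑ i, (x i - ystar N y i) ^ 2) < 2 * ((N : ℝ) + 1 + 2) * t →
      t < 4 * ((N : ℝ) + 1 + 2) →
      Hexp N x y t
        ≤ C * (x (Fin.last N) + y (Fin.last N) + t)
            * Real.sqrt (∑ i, (x i - ystar N y i + t * eN N i) ^ 2) ^ (-((N : ℝ) + 1)) := by
  have hN0 : (0:ℝ) ≤ (N:ℝ) := Nat.cast_nonneg N
  set p : ℝ := ((N:ℝ) + 3) / 2 with hp
  have hp1 : 1 < p := by rw [hp]; linarith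
  have hp0 : 0 ≤ p := by linarith
  set CA : ℝ := Real.exp (7 * ((N:ℝ) + 3) / 2) with hCA
  have hCA0 : 0 < CA := Real.exp_pos _
  set F : ℝ := ((N+2).factorial : ℝ) + 1 / (p - 1) with hF
  have hF0 : 0 < F := by
    have h1 : (0:ℝ) < ((N+2).factorial : ℝ) := by exact_mod_cast Nat.factorial_pos (N+2)
    have h2 : (0:ℝ) < 1 / (p - 1) := one_div_pos.2 (by linarith)
    rw [hF]; linarith
  refine ⟨CA * F * (2:ℝ) ^ ((N:ℝ) + 1),
    mul_pos (mul_pos hCA0 hF0) (Real.rpow_pos_of_pos two_pos _), ?_⟩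
  intro x y t hx hy ht hD1 hD2
  set xN := x (Fin.last N) with hxN
  set yN := y (Fin.last N) with hyN
  set A : ℝ := xN + yN + t with hA
  set R2 : ℝ := ∑ i, (x i - ystar N y i + t * eN N i) ^ 2 with hR2
  have hyst : ystar N y (Fin.last N) = -yN := by simp [ystar, hyN]
  have heNl : eN N (Fin.last N) = 1 := by simp [eN]
  have heNe : ∀ i : Fin (N+1), i ≠ Fin.last N → eN N i = 0 := fun i hi =>
    Pi.single_eq_of_ne hi _
  have hterm : ∀ τ : ℝ,
      x (Fin.last N) - ystar N y (Fin.last N) + τ * eN N (Fin.last N) = xN + yN + τ := by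
    intro τ; rw [hyst, heNl, ← hxN]; ring
  have hA0 : 0 < A := by rw [hA]; linarith
  have hAR : A ^ 2 ≤ R2 := by
    have h := Finset.single_le_sum (f := fun i => (x i - ystar N y i + t * eN N i) ^ 2)
      (fun i _ => sq_nonneg _) (Finset.mem_univ (Fin.last N))
    rw [hterm t] at h
    rw [hR2, hA]; exact h
  have hR2pos : 0 < R2 := lt_of_lt_of_le (pow_pos hA0 2) hAR
  have hxyb : xN + yN ≤ 3 * ((N:ℝ) + 3) := by
    have h := Finset.single_le_sum (f := fun i => (x i - ystar N y i) ^ 2)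
      (fun i _ => sq_nonneg _) (Finset.mem_univ (Fin.last N))
    rw [show x (Fin.last N) - ystar N y (Fin.last N) = xN + yN by rw [hyst, ← hxN]; ring] at h
    nlinarith [hD1, hD2, hx, hy]
  have hAK : A ≤ 7 * ((N:ℝ) + 3) := by rw [hA]; linarith
  have hq : ∀ τ : ℝ, 0 ≤ τ → τ ≤ t →
      R2 ≤ (∑ i, (x i - ystar N y i + τ * eN N i) ^ 2) + 2 * (t - τ) * A := by
    intro τ h0 h1
    have key : R2 - (∑ i, (x i - ystar N y i + τ * eN N i) ^ 2)
        = (xN + yN + t) ^ 2 - (xN + yN + τ) ^ 2 := by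
      rw [hR2, ← Finset.sum_sub_distrib, Finset.sum_eq_single (Fin.last N)]
      · rw [hterm t, hterm τ]
      · intro i _ hi
        rw [heNe i hi]; ring
      · intro h; exact absurd (Finset.mem_univ _) h
    have hh : 0 ≤ xN := hx
    have hh2 : 0 ≤ yN := hy
    nlinarith [key, sq_nonneg (t - τ)]
  set c : ℝ := R2 / 4 with hc
  have hcpos : 0 < c := by rw [hc]; linarith
  obtain ⟨hmeas, hb1, hint, hbnd⟩ :=
    hfun_facts p c (N+2) hp1 (by push_cast; rw [hp]; linarith) hcpos
  set f : ℝ → ℝ := fun s => s ^ (-p) * Real.exp (-(c / s)) with hfdef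
  have hfnn : ∀ s : ℝ, 0 ≤ s → 0 ≤ f s := fun s hs =>
    mul_nonneg (Real.rpow_nonneg hs _) (Real.exp_pos _).le
  set g : ℝ → ℝ := fun τ => (4 * π * (t - τ)) ^ (-((N : ℝ) + 1) / 2) *
      ((x (Fin.last N) + y (Fin.last N) + τ) / (t - τ)) *
      Real.exp (-(∑ i, (x i - ystar N y i + τ * eN N i) ^ 2) / (4 * (t - τ))) with hg
  have hHg : Hexp N x y t = ∫ τ in (0:ℝ)..t, g τ := rfl
  -- pointwise bound
  have hpt : ∀ τ ∈ Icc (0:ℝ) t, g τ ≤ CA * A * f (t - τ) := by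
    intro τ hτ
    rcases eq_or_lt_of_le hτ.2 with rfl | hlt
    · have h1 : g τ = 0 := by
        simp only [hg, sub_self, div_zero, mul_zero, zero_mul]
      have h2 : f (τ - τ) = 0 := by
        rw [sub_self]
        show (0:ℝ) ^ (-p) * Real.exp (-(c / 0)) = 0
        rw [Real.zero_rpow (show -p ≠ 0 by intro h; linarith), zero_mul]
      rw [h1, h2, mul_zero]
    · have hτ0 : 0 ≤ τ := hτ.1
      have hs0 : 0 < t - τ := by linarith
      have hcc : c / (t - τ) = R2 / (4 * (t - τ)) := by rw [hc, div_div]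
      have hEb : Real.exp (-(∑ i, (x i - ystar N y i + τ * eN N i) ^ 2) / (4 * (t - τ)))
          ≤ Real.exp (A / 2) * Real.exp (-(c / (t - τ))) := by
        rw [← Real.exp_add]
        apply Real.exp_le_exp.2
        rw [hcc]
        set q := ∑ i, (x i - ystar N y i + τ * eN N i) ^ 2 with hqd
        have hq' := hq τ hτ0 hlt.le
        have h4 : (0:ℝ) < 4 * (t - τ) := by linarith
        have hiden : A / 2 + -(R2 / (4 * (t - τ))) - (-q / (4 * (t - τ)))
            = (2 * A * (t - τ) + q - R2) / (4 * (t - τ)) := by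
          field_simp; ring
        have hnum : 0 ≤ (2 * A * (t - τ) + q - R2) / (4 * (t - τ)) :=
          div_nonneg (by linarith) h4.le
        linarith [hiden, hnum]
      have hpiece1 : (4 * π * (t - τ)) ^ (-((N : ℝ) + 1) / 2)
          ≤ (t - τ) ^ (-((N : ℝ) + 1) / 2) := by
        rw [Real.mul_rpow (by positivity) hs0.le]
        have h1 : (4 * π : ℝ) ^ (-((N : ℝ) + 1) / 2) ≤ 1 :=
          Real.rpow_le_one_of_one_le_of_nonpos (by linarith [pi_gt_three])
            (by linarith)
        exact mul_le_of_le_one_left (Real.rpow_nonneg hs0.le _) h1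
      have hpiece2 : (x (Fin.last N) + y (Fin.last N) + τ) / (t - τ) ≤ A / (t - τ) := by
        rw [← hxN, ← hyN]
        exact div_le_div_of_nonneg_right (by rw [hA]; linarith) hs0.le
      have hnn2 : 0 ≤ (x (Fin.last N) + y (Fin.last N) + τ) / (t - τ) := by
        rw [← hxN, ← hyN]
        apply div_nonneg (by linarith) hs0.le
      have hpow : (t - τ) ^ (-((N : ℝ) + 1) / 2) / (t - τ) = (t - τ) ^ (-p) := by
        have h := Real.rpow_sub hs0 (-((N : ℝ) + 1) / 2) 1
        rw [Real.rpow_one] at h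
        rw [← h]; congr 1; rw [hp]; ring
      have hexpA : Real.exp (A / 2) ≤ CA := by
        rw [hCA]; exact Real.exp_le_exp.2 (by linarith)
      calc g τ ≤ (t - τ) ^ (-((N : ℝ) + 1) / 2) * (A / (t - τ))
            * (Real.exp (A / 2) * Real.exp (-(c / (t - τ)))) := by
            simp only [hg]
            apply mul_le_mul _ hEb (Real.exp_pos _).le
            · positivity
            apply mul_le_mul hpiece1 hpiece2 hnn2 (Real.rpow_nonneg hs0.le _)
        _ = (A * ((t - τ) ^ (-p) * Real.exp (-(c / (t - τ))))) * Real.exp (A / 2) := by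
            rw [← hpow]; ring
        _ ≤ (A * ((t - τ) ^ (-p) * Real.exp (-(c / (t - τ))))) * CA := by
            apply mul_le_mul_of_nonneg_left hexpA
            have := Real.rpow_nonneg hs0.le (-p)
            positivity
        _ = CA * A * f (t - τ) := by rw [hfdef]; ring
  -- interval integrability of the bound
  have hbint : IntervalIntegrable (fun τ => CA * A * f (t - τ)) volume 0 t := by
    apply IntervalIntegrable.const_mul
    rw [intervalIntegrable_iff, uIoc_of_le ht.le]
    refine Integrable.mono' (integrable_const (((N+2).factorial : ℝ) * c ^ (-p)))
      ((hmeas.comp (measurable_const.sub measurable_id)).aestronglyMeasurable) ?_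
    filter_upwards [ae_restrict_mem measurableSet_Ioc] with τ hτ
    rw [Real.norm_eq_abs, abs_of_nonneg (hfnn _ (by linarith [hτ.2] : (0:ℝ) ≤ t - τ))]
    rcases lt_or_eq_of_le hτ.2 with h | h
    · exact hb1 (t - τ) (by linarith)
    · rw [h, sub_self]
      have hf0 : f 0 = 0 := by
        show (0:ℝ) ^ (-p) * Real.exp (-(c / 0)) = 0
        rw [Real.zero_rpow (show -p ≠ 0 by intro hh; linarith), zero_mul]
      rw [hf0]
      positivity
  -- assemble
  have hHle : Hexp N x y t ≤ ∫ τ in (0:ℝ)..t, CA * A * f (t - τ) := by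
    by_cases hgi : IntervalIntegrable g volume 0 t
    · rw [hHg]
      exact intervalIntegral.integral_mono_on ht.le hgi hbint hpt
    · rw [hHg, intervalIntegral.integral_undef hgi]
      apply intervalIntegral.integral_nonneg ht.le
      intro u hu
      have : 0 ≤ f (t - u) := hfnn _ (by linarith [hu.2])
      positivity
  have hIeq : (∫ τ in (0:ℝ)..t, CA * A * f (t - τ)) = CA * A * ∫ τ in (0:ℝ)..t, f τ := by
    rw [intervalIntegral.integral_const_mul]
    congr 1
    have h := intervalIntegral.integral_comp_sub_left (a := (0:ℝ)) (b := t) f t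
    simpa using h
  have hIle : (∫ τ in (0:ℝ)..t, f τ) ≤ F * c ^ (1 - p) := by
    rw [intervalIntegral.integral_of_le ht.le]
    refine le_trans (setIntegral_mono_set hint ?_ ?_) hbnd
    · filter_upwards [ae_restrict_mem measurableSet_Ioi] with s hs
      exact hfnn s (le_of_lt hs)
    · exact HasSubset.Subset.eventuallyLE Ioc_subset_Ioi_self
  -- final algebra
  have hsq : Real.sqrt R2 ^ (-((N:ℝ) + 1)) = R2 ^ (1 - p) := by
    rw [Real.sqrt_eq_rpow, ← Real.rpow_mul hR2pos.le]
    congr 1; rw [hp]; ring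
  have hcpow : c ^ (1 - p) = R2 ^ (1 - p) * (2:ℝ) ^ ((N:ℝ) + 1) := by
    have h4 : ((2:ℝ) ^ (2:ℝ)) = 4 := by
      rw [show (2:ℝ) ^ (2:ℝ) = (2:ℝ) ^ ((2:ℕ):ℝ) by norm_num, Real.rpow_natCast]; norm_num
    rw [hc, Real.div_rpow hR2pos.le (by norm_num : (0:ℝ) ≤ 4), div_eq_mul_inv]
    congr 1
    rw [← Real.rpow_neg (by norm_num : (0:ℝ) ≤ 4), ← h4,
      ← Real.rpow_mul (by norm_num : (0:ℝ) ≤ 2)]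
    congr 1
    rw [hp]; ring
  calc Hexp N x y t ≤ CA * A * ∫ τ in (0:ℝ)..t, f τ := by rw [← hIeq]; exact hHle
    _ ≤ CA * A * (F * c ^ (1 - p)) := by
        apply mul_le_mul_of_nonneg_left hIle (by positivity)
    _ = CA * F * (2:ℝ) ^ ((N:ℝ) + 1) * A * (R2 ^ (1 - p)) := by
        rw [hcpow]; ring
    _ = CA * F * (2:ℝ) ^ ((N:ℝ) + 1) * (xN + yN + t) * Real.sqrt R2 ^ (-((N:ℝ) + 1)) := by
        rw [hsq, hA]
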